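/- arXiv:2508.14328 — 3 statements merged into one kernel-verified Lean document; each statement's English description precedes it below -/
import Mathlib

section
/- Let $F, P: \mathcal{G} \to \mathbb{R}$ with $P(g) > 0$ on a nonempty set $\mathcal{G}$, and $p(c) = \inf_{g \in \mathcal{G}}(F(g) - cP(g))$. If $p(c^*) = 0$ and the infimum is attained at some $g^* \in \mathcal{G}$, then $g^*$ minimizes the ratio $F(g)/P(g)$ over $\mathcal{G}$, and the minimum ratio equals $c^*$. -/
theorem dinkelbach_root_optimal_general {G : Type*} (F P : G → ℝ)
    (hP : ∀ g, 0 < P g) (c : ℝ) (gstar : G)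
    (hattain : ∀ g, F gstar - c * P gstar ≤ F g - c * P g)
    (hzero : F gstar - c * P gstar = 0) :
    (∀ g, F gstar / P gstar ≤ F g / P g) ∧ F gstar / P gstar = c := by
  have hratio : F gstar / P gstar = c := by
    rw [div_eq_iff (hP gstar).ne']
    linarith
  refine ⟨fun g => ?_, hratio⟩
  rw [hratio, le_div_iff₀ (hP g)]
  linarith [hattain g]

/-- Dinkelbach's theorem: if `p(c*) = 0` and the infimum is attained at `g*`, then `g*`
minimizes the ratio `F g / P g` and the minimum ratio equals `c*`. -/
theorem dinkelbach_root_optimal {G : Type*} [Nonempty G] (F P : G → ℝ)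
    (hP : ∀ g, 0 < P g) (c : ℝ) (gstar : G)
    (hattain : ∀ g, F gstar - c * P gstar ≤ F g - c * P g)
    (hzero : F gstar - c * P gstar = 0) :
    (∀ g, F gstar / P gstar ≤ F g / P g) ∧ F gstar / P gstar = c :=
  dinkelbach_root_optimal_general F P hP c gstar hattain hzero
end

section
/- Let $w_m, f_m > 0$ for $m = 1, \dots, M$ with $\sum_m f_m = 1$, and $a_m > 0$, $b \geq 0$. Consider $L(f) = b\sum_m \frac{w_m}{f_m} + \left(\sum_m \frac{w_m}{f_m}\right)\left(\sum_n f_n a_n\right)$. At any critical point of $L$ restricted to the simplex (via a Lagrange multiplier $\mu$), the multiplier satisfies $\mu = b \sum_{m=1}^M \frac{w_m}{f_m}$. -/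
open Finset

section

variable {ι 𝕜 : Type*} [Fintype ι] [Field 𝕜]

theorem eq_neg_sum_mul_of_add_eq_zero {f g : ι → 𝕜} {μ : 𝕜} (hsum : ∑ m, f m = 1)
    (h : ∀ m, g m + μ = 0) : μ = -∑ m, f m * g m := by
  have hg : ∀ m, g m = -μ := fun m => eq_neg_of_add_eq_zero_left (h m)
  simp only [hg, ← sum_mul, hsum]
  ring

/-- Euler's identity for `b ∑ w/f + (∑ w/f)(∑ f a)`: the first term is homogeneous of degree `-1`
in `f` and the second of degree `0`. -/
theorem sum_mul_grad_eq {b : 𝕜} {w f a : ι → 𝕜} (hf : ∀ m, f m ≠ 0) :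
    ∑ m, f m * (-(b * w m / f m ^ 2) + a m * (∑ n, w n / f n)
      - w m / f m ^ 2 * (∑ n, f n * a n)) = -(b * ∑ m, w m / f m) := by
  set S := ∑ n, w n / f n
  set T := ∑ n, f n * a n
  have hterm : ∀ m, f m * (-(b * w m / f m ^ 2) + a m * S - w m / f m ^ 2 * T)
      = -(b * (w m / f m)) + f m * a m * S - w m / f m * T := by
    intro m
    field_simp [hf m]
  calc ∑ m, f m * (-(b * w m / f m ^ 2) + a m * S - w m / f m ^ 2 * T)
      = -(b * S) + T * S - S * T := by
        simp only [hterm, sum_sub_distrib, sum_add_distrib, sum_neg_distrib,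
          ← mul_sum, ← sum_mul, S, T]
    _ = -(b * S) := by ring

end

theorem lagrange_multiplier_identity_general (M : ℕ) (w f a : Fin M → ℝ) (b μ : ℝ)
    (hf : ∀ m, 0 < f m)
    (hsum : ∑ m, f m = 1)
    (hstat : ∀ m, -(b * w m / (f m) ^ 2) + a m * (∑ n, w n / f n)
      - (w m / (f m) ^ 2) * (∑ n, f n * a n) + μ = 0) :
    μ = b * ∑ m, w m / f m := by
  rw [eq_neg_sum_mul_of_add_eq_zero hsum hstat, sum_mul_grad_eq fun m => (hf m).ne', neg_neg]

/-- Lagrange multiplier identity: at any critical point of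
`L f = b ∑ w m / f m + (∑ w m / f m) * (∑ f n * a n)` on the simplex, the multiplier satisfies
`μ = b ∑ w m / f m`. -/
theorem lagrange_multiplier_identity (M : ℕ) (w f a : Fin M → ℝ) (b μ : ℝ)
    (hw : ∀ m, 0 < w m) (hf : ∀ m, 0 < f m) (ha : ∀ m, 0 < a m) (hb : 0 ≤ b)
    (hsum : ∑ m, f m = 1)
    (hstat : ∀ m, -(b * w m / (f m) ^ 2) + a m * (∑ n, w n / f n)
      - (w m / (f m) ^ 2) * (∑ n, f n * a n) + μ = 0) :
    μ = b * ∑ m, w m / f m :=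
  lagrange_multiplier_identity_general M w f a b μ hf hsum hstat
end

section
/- Let $w_m > 0$, $a_m > 0$, $b > 0$. The minimizer over the open simplex of $L(f) = b\sum_m \frac{w_m}{f_m} + \left(\sum_m \frac{w_m}{f_m}\right)\left(\sum_n f_n a_n\right)$ is given by $f_m = \frac{\sqrt{w_m/(a_m + b)}}{\sum_{n=1}^M \sqrt{w_n/(a_n + b)}}$. -/
/-!
Writing `c m = a m + b` and using `∑ f = 1`, the objective becomes `(∑ w m / f m) * (∑ f m * c m)`.
With `g m = √(w m / c m)`, so that `w m = c m * g m ^ 2`, Cauchy–Schwarz applied to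
`c m * g m = √(c m * g m ^ 2 / f m) * √(f m * c m)` bounds it below by `(∑ c m * g m) ^ 2`,
and the normalized vector `g / ∑ g` attains this bound.
-/

open Finset

namespace Finset

variable {ι : Type*} {s : Finset ι} {c f g : ι → ℝ}

theorem sq_sum_mul_le_sum_mul_sq_div_mul_sum_mul (hc : ∀ i ∈ s, 0 ≤ c i)
    (hf : ∀ i ∈ s, 0 < f i) :
    (∑ i ∈ s, c i * g i) ^ 2 ≤ (∑ i ∈ s, c i * g i ^ 2 / f i) * ∑ i ∈ s, f i * c i := by
  refine sum_sq_le_sum_mul_sum_of_sq_le_mul s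
    (fun i hi => div_nonneg (mul_nonneg (hc i hi) (sq_nonneg _)) (hf i hi).le)
    (fun i hi => mul_nonneg (hf i hi).le (hc i hi)) fun i hi => le_of_eq ?_
  field_simp [(hf i hi).ne']

theorem sum_mul_sq_div_normalized_mul_sum_normalized_mul (hg : ∀ i ∈ s, g i ≠ 0)
    (hS : ∑ i ∈ s, g i ≠ 0) :
    (∑ i ∈ s, c i * g i ^ 2 / (g i / ∑ j ∈ s, g j)) * ∑ i ∈ s, g i / (∑ j ∈ s, g j) * c i =
      (∑ i ∈ s, c i * g i) ^ 2 := by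
  set S := ∑ j ∈ s, g j
  have hleft : ∑ i ∈ s, c i * g i ^ 2 / (g i / S) = S * ∑ i ∈ s, c i * g i := by
    rw [mul_sum]
    refine sum_congr rfl fun i hi => ?_
    field_simp [hg i hi]
  have hright : ∑ i ∈ s, g i / S * c i = (∑ i ∈ s, c i * g i) / S := by
    rw [sum_div]
    refine sum_congr rfl fun i _ => ?_
    ring
  rw [hleft, hright]
  field_simp

theorem sum_mul_add_const_of_sum_eq_one {a : ι → ℝ} (b : ℝ) (hf : ∑ i ∈ s, f i = 1) :
    ∑ i ∈ s, f i * (a i + b) = ∑ i ∈ s, f i * a i + b := by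
  simp only [mul_add, sum_add_distrib, ← sum_mul, hf, one_mul]

end Finset

/-- Closed-form optimal scheduling frequencies: the minimizer over the open simplex of
`L f = b ∑ w m / f m + (∑ w m / f m) * (∑ f n * a n)` is
`f* m = √(w m / (a m + b)) / ∑ n √(w n / (a n + b))`. -/
theorem optimal_scheduling_frequency (M : ℕ) (hM : 0 < M) (w a : Fin M → ℝ) (b : ℝ)
    (hw : ∀ m, 0 < w m) (ha : ∀ m, 0 < a m) (hb : 0 < b) :
    let fstar : Fin M → ℝ :=
      fun m => Real.sqrt (w m / (a m + b)) / ∑ n, Real.sqrt (w n / (a n + b))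
    let L : (Fin M → ℝ) → ℝ :=
      fun f => b * (∑ m, w m / f m) + (∑ m, w m / f m) * (∑ n, f n * a n)
    (∀ m, 0 < fstar m) ∧ (∑ m, fstar m = 1) ∧
      (∀ f : Fin M → ℝ, (∀ m, 0 < f m) → (∑ m, f m = 1) → L fstar ≤ L f) := by
  intro fstar L
  have : Nonempty (Fin M) := Fin.pos_iff_nonempty.mp hM
  set c : Fin M → ℝ := fun m => a m + b
  set g : Fin M → ℝ := fun m => Real.sqrt (w m / c m)
  have hc : ∀ m, 0 < c m := fun m => add_pos (ha m) hb
  have hg : ∀ m, 0 < g m := fun m => Real.sqrt_pos.2 (div_pos (hw m) (hc m))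
  have hS : 0 < ∑ n, g n := sum_pos (fun n _ => hg n) univ_nonempty
  have hw_eq : ∀ m, w m = c m * g m ^ 2 := fun m => by
    rw [Real.sq_sqrt (div_pos (hw m) (hc m)).le, mul_div_cancel₀ _ (hc m).ne']
  have hL : ∀ f : Fin M → ℝ, ∑ m, f m = 1 →
      L f = (∑ m, c m * g m ^ 2 / f m) * ∑ n, f n * c n := fun f hf => by
    simp only [L, c, sum_mul_add_const_of_sum_eq_one b hf, ← hw_eq]
    ring
  have hsum : ∑ m, fstar m = 1 := by
    change ∑ m, g m / ∑ n, g n = 1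
    rw [← sum_div, div_self hS.ne']
  refine ⟨fun m => div_pos (hg m) hS, hsum, fun f hf hf_sum => ?_⟩
  rw [hL fstar hsum, hL f hf_sum,
    sum_mul_sq_div_normalized_mul_sum_normalized_mul (fun m _ => (hg m).ne') hS.ne']
  exact sq_sum_mul_le_sum_mul_sq_div_mul_sum_mul (fun m _ => (hc m).le) fun m _ => hf m
end
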